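/- For a positive definite N×N complex matrix X and 0 < s < 1, one has tr X^s = inf over positive definite Y of ( s·tr(XY) + (1−s)·tr Y^{−s/(1−s)} ). -/

import Mathlib

open Matrix ComplexOrder

noncomputable def mpow {n : Type*} [Fintype n] [DecidableEq n]
    (A : Matrix n n ℂ) (p : ℝ) : Matrix n n ℂ :=
  cfc (fun x : ℝ => x ^ p) A

noncomputable def rtr {n : Type*} [Fintype n] (A : Matrix n n ℂ) : ℝ :=
  (Matrix.trace A).re

/-!
The lower bound is the scalar weighted AM–GM inequality `a ^ s ≤ s a b + (1 - s) b ^ (-s/(1-s))`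
transported to matrices: in eigenbases of `X` and `Y`, `tr X ^ s`, `tr (X Y)` and
`tr Y ^ (-s/(1-s))` are averages of the scalar terms against the doubly stochastic matrix
`|⟨uᵢ, vⱼ⟩|²`, where `uᵢ` and `vⱼ` are orthonormal eigenvectors of `X` and `Y`. The bound is attained at `Y = X ^ (s - 1)`.
-/

open scoped MatrixOrder

lemma Real.rpow_le_mul_add_rpow {s a b : ℝ} (hs0 : 0 < s) (hs1 : s < 1) (ha : 0 ≤ a)
    (hb : 0 < b) : a ^ s ≤ s * (a * b) + (1 - s) * b ^ (-s / (1 - s)) := by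
  have h1s : 1 - s ≠ 0 := by linarith
  calc a ^ s = (a * b) ^ s * (b ^ (-s / (1 - s))) ^ (1 - s) := by
        rw [Real.mul_rpow ha hb.le, ← Real.rpow_mul hb.le, div_mul_cancel₀ _ h1s, mul_assoc,
          ← Real.rpow_add hb, add_neg_cancel, Real.rpow_zero, mul_one]
    _ ≤ s * (a * b) + (1 - s) * b ^ (-s / (1 - s)) :=
        Real.geom_mean_le_arith_mean2_weighted hs0.le (by linarith) (by positivity)
          (by positivity) (add_sub_cancel s 1)

namespace Matrix

variable {n : Type*} [Fintype n] [DecidableEq n]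

lemma sum_le_of_mem_doublyStochastic {P : Matrix n n ℝ} (hP : P ∈ doublyStochastic ℝ n)
    {f g : n → ℝ} {h : n → n → ℝ} (hfgh : ∀ i j, f i ≤ h i j + g j) :
    ∑ i, f i ≤ ∑ i, ∑ j, P i j * h i j + ∑ j, g j := by
  calc ∑ i, f i = ∑ i, ∑ j, P i j * f i := by
        simp_rw [← Finset.sum_mul, sum_row_of_mem_doublyStochastic hP, one_mul]
    _ ≤ ∑ i, ∑ j, P i j * (h i j + g j) := by
        gcongr with i _ j _
        · exact nonneg_of_mem_doublyStochastic hP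
        · exact hfgh i j
    _ = ∑ i, ∑ j, P i j * h i j + ∑ j, g j := by
        simp_rw [mul_add, Finset.sum_add_distrib,
          Finset.sum_comm (γ := n) (f := fun i j => P i j * g j), ← Finset.sum_mul,
          sum_col_of_mem_doublyStochastic hP, one_mul]

lemma normSq_mem_doublyStochastic (U : unitaryGroup n ℂ) :
    of (fun i j => Complex.normSq (U i j)) ∈ doublyStochastic ℝ n := by
  refine mem_doublyStochastic_iff_sum.2
    ⟨fun i j => Complex.normSq_nonneg _, fun i => ?_, fun j => ?_⟩
  · have h := congr_arg (fun M : Matrix n n ℂ => (M i i).re) (Unitary.coe_mul_star_self U)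
    simpa [mul_apply, Complex.mul_conj, Complex.re_sum] using h
  · have h := congr_arg (fun M : Matrix n n ℂ => (M j j).re) (Unitary.coe_star_mul_self U)
    simpa [mul_apply, Complex.conj_mul', Complex.re_sum, ← Complex.ofReal_pow,
      Complex.normSq_eq_norm_sq] using h

lemma trace_diagonal_mul_mul_diagonal_mul_star {R : Type*} [CommSemiring R] [StarRing R]
    (a b : n → R) (W : Matrix n n R) :
    trace (diagonal a * W * diagonal b * star W) =
      ∑ i, ∑ j, W i j * star (W i j) * (a i * b j) := by
  simp only [trace, diag_apply, mul_apply, diagonal_apply, ite_mul, zero_mul, Finset.sum_ite_eq,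
    Finset.mem_univ, ↓reduceIte, mul_ite, mul_zero, Finset.sum_ite_eq', star_apply]
  exact Finset.sum_congr rfl fun i _ => Finset.sum_congr rfl fun j _ => by ring

namespace IsHermitian

lemma rtr_cfc {A : Matrix n n ℂ} (hA : A.IsHermitian) (f : ℝ → ℝ) :
    rtr (cfc f A) = ∑ i, f (hA.eigenvalues i) := by
  rw [hA.cfc_eq, IsHermitian.cfc, Unitary.conjStarAlgAut_apply, rtr, trace_mul_cycle,
    Unitary.coe_star_mul_self, one_mul, trace_diagonal]
  simp [Complex.re_sum]

lemma rtr_mul {A B : Matrix n n ℂ} (hA : A.IsHermitian) (hB : B.IsHermitian) :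
    rtr (A * B) = ∑ i, ∑ j, Complex.normSq ((hA.eigenvectorUnitary⁻¹ * hB.eigenvectorUnitary :
      unitaryGroup n ℂ) i j) * (hA.eigenvalues i * hB.eigenvalues j) := by
  set U : Matrix n n ℂ := ↑hA.eigenvectorUnitary with hU_def
  set V : Matrix n n ℂ := ↑hB.eigenvectorUnitary with hV_def
  have hAB : A * B = U * (diagonal (RCLike.ofReal ∘ hA.eigenvalues) * (star U * V) *
      diagonal (RCLike.ofReal ∘ hB.eigenvalues) * star (star U * V)) * star U := by
    conv_lhs => rw [hA.spectral_theorem, hB.spectral_theorem]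
    have hU : U * star U = 1 := Unitary.mul_star_self_of_mem hA.eigenvectorUnitary.2
    simp only [Unitary.conjStarAlgAut_apply, star_mul, star_star, Matrix.mul_assoc, hU,
      Matrix.mul_one, ← hU_def, ← hV_def]
  rw [rtr, hAB, trace_mul_cycle, Unitary.coe_star_mul_self, one_mul,
    trace_diagonal_mul_mul_diagonal_mul_star, Complex.re_sum]
  refine Finset.sum_congr rfl fun i _ => ?_
  rw [Complex.re_sum]
  refine Finset.sum_congr rfl fun j _ => ?_
  simp [U, V, Complex.mul_conj]

end IsHermitian

lemma continuousOn_spectrum (A : Matrix n n ℂ) (f : ℝ → ℝ) : ContinuousOn f (spectrum ℝ A) :=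
  A.finite_real_spectrum.continuousOn f

lemma PosDef.pos_of_mem_spectrum {A : Matrix n n ℂ} (hA : A.PosDef) {x : ℝ}
    (hx : x ∈ spectrum ℝ A) : 0 < x :=
  (StarOrderedRing.isStrictlyPositive_iff_spectrum_pos A hA.1.isSelfAdjoint).1
    hA.isStrictlyPositive x hx

end Matrix

section mpow

variable {n : Type*} [Fintype n] [DecidableEq n] {A : Matrix n n ℂ}

lemma posDef_mpow (hA : A.PosDef) (p : ℝ) : (mpow A p).PosDef := by
  rw [← isStrictlyPositive_iff_posDef, mpow,
    cfc_isStrictlyPositive_iff _ _ (continuousOn_spectrum A _) hA.1.isSelfAdjoint]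
  exact fun x hx => Real.rpow_pos_of_pos (hA.pos_of_mem_spectrum hx) p

lemma mpow_mpow (hA : A.PosDef) (p q : ℝ) : mpow (mpow A p) q = mpow A (p * q) := by
  rw [mpow, mpow, ← cfc_comp' _ _ A ((A.finite_real_spectrum.image _).continuousOn _)
    (continuousOn_spectrum _ _) hA.1.isSelfAdjoint]
  exact cfc_congr fun x hx => (Real.rpow_mul (hA.pos_of_mem_spectrum hx).le p q).symm

lemma mul_mpow (hA : A.PosDef) (p : ℝ) : A * mpow A p = mpow A (1 + p) :=
  calc A * mpow A p = cfc id A * cfc (fun x : ℝ => x ^ p) A := by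
        rw [cfc_id ℝ A hA.1.isSelfAdjoint, mpow]
    _ = cfc (fun x : ℝ => id x * x ^ p) A :=
        (cfc_mul _ _ A (continuousOn_spectrum _ _) (continuousOn_spectrum _ _)).symm
    _ = mpow A (1 + p) := cfc_congr fun x hx => by
        simp [Real.rpow_add (hA.pos_of_mem_spectrum hx)]

lemma rtr_mpow_le {B : Matrix n n ℂ} (hA : A.PosDef) (hB : B.PosDef) {s : ℝ} (hs0 : 0 < s)
    (hs1 : s < 1) :
    rtr (mpow A s) ≤ s * rtr (A * B) + (1 - s) * rtr (mpow B (-s / (1 - s))) := by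
  rw [mpow, mpow, hA.1.rtr_cfc, hB.1.rtr_cfc, hA.1.rtr_mul hB.1]
  have hscalar : ∀ i j, hA.1.eigenvalues i ^ s ≤ s * (hA.1.eigenvalues i * hB.1.eigenvalues j) +
      (1 - s) * hB.1.eigenvalues j ^ (-s / (1 - s)) := fun i j =>
    Real.rpow_le_mul_add_rpow hs0 hs1 (hA.eigenvalues_pos i).le (hB.eigenvalues_pos j)
  refine (sum_le_of_mem_doublyStochastic (normSq_mem_doublyStochastic
    (hA.1.eigenvectorUnitary⁻¹ * hB.1.eigenvectorUnitary)) hscalar).trans_eq ?_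
  simp only [of_apply, Finset.mul_sum]
  congr 1
  exact Finset.sum_congr rfl fun i _ => Finset.sum_congr rfl fun j _ => mul_left_comm _ _ _

end mpow

theorem trace_pow_variational_inf {N : ℕ} (X : Matrix (Fin N) (Fin N) ℂ)
    (hX : X.PosDef) (s : ℝ) (hs0 : 0 < s) (hs1 : s < 1) :
    rtr (mpow X s) =
      sInf { r : ℝ | ∃ Y : Matrix (Fin N) (Fin N) ℂ, Y.PosDef ∧
        r = s * rtr (X * Y) + (1 - s) * rtr (mpow Y (-s / (1 - s))) } := by
  refine (IsLeast.csInf_eq ⟨?_, ?_⟩).symm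
  · refine ⟨mpow X (s - 1), posDef_mpow hX _, ?_⟩
    have hexp : (s - 1) * (-s / (1 - s)) = s := by
      field_simp [(by linarith : 1 - s ≠ 0)]
      ring
    rw [mul_mpow hX, mpow_mpow hX, hexp, add_sub_cancel]
    ring
  · rintro r ⟨Y, hY, rfl⟩
    exact rtr_mpow_le hX hY hs0 hs1
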